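/- Let F be an algebraically closed field, f(ξ) ∈ F[ξ] a nonzero polynomial of degree n > 1 with zero constant term, and c an element of the split octonion algebra O over F. Then the set X = {x ∈ O : f(x) = c} is infinite if and only if c = γ·1 for some γ ∈ F. -/

import Mathlib

/-!
Every split octonion satisfies `x² = tr(x) x - N(x)`, and over an algebraically closed field
this quadratic splits as `(X - l)(X - m)`. Hence `f(x) = B x + A`, where `B` is the divided
difference of `f` at `l, m` and `A = f(l) - l B`, and `f(x)` has eigenvalues `f(l), f(m)`.
If `c` is not scalar then `B ≠ 0`, so `x = B⁻¹ (c - A)` is determined by `(l, m)`; both are roots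
of the nonzero polynomial `χ_c(f(X))`, leaving finitely many solutions. If `c = γ`, pick `l, m`
with `f(l) = f(m) = γ` and `B = 0` (two roots of `f - γ`, or a double one): then every
`(l, s e₁; 0, m)` is a solution.
-/

noncomputable section

/-- The split octonion algebra over `F`, given by Zorn vector matrices
`(x1, u; v, x2)` with `x1, x2 ∈ F` and `u, v ∈ F³`. -/
@[ext]
structure SplitOctonion (F : Type*) where
  x1 : F
  u : Fin 3 → F
  v : Fin 3 → F
  x2 : F

namespace SplitOctonion

variable {F : Type*} [Field F]

/-- Dot product on `F³`. -/
def dot (x y : Fin 3 → F) : F := x 0 * y 0 + x 1 * y 1 + x 2 * y 2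

/-- Cross product on `F³`. -/
def cross (x y : Fin 3 → F) : Fin 3 → F :=
  ![x 1 * y 2 - x 2 * y 1, x 2 * y 0 - x 0 * y 2, x 0 * y 1 - x 1 * y 0]

instance : Zero (SplitOctonion F) := ⟨⟨0, 0, 0, 0⟩⟩
instance : One (SplitOctonion F) := ⟨⟨1, 0, 0, 1⟩⟩
instance : Add (SplitOctonion F) :=
  ⟨fun x y => ⟨x.x1 + y.x1, x.u + y.u, x.v + y.v, x.x2 + y.x2⟩⟩
instance : Neg (SplitOctonion F) := ⟨fun x => ⟨-x.x1, -x.u, -x.v, -x.x2⟩⟩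
instance : SMul F (SplitOctonion F) :=
  ⟨fun c x => ⟨c * x.x1, c • x.u, c • x.v, c * x.x2⟩⟩

/-- Zorn vector matrix multiplication. -/
instance : Mul (SplitOctonion F) :=
  ⟨fun x y => ⟨x.x1 * y.x1 + dot x.u y.v,
    x.x1 • y.u + y.x2 • x.u - cross x.v y.v,
    y.x1 • x.v + x.x2 • y.v + cross x.u y.u,
    x.x2 * y.x2 + dot x.v y.u⟩⟩

@[simp] lemma zero_x1 : (0 : SplitOctonion F).x1 = 0 := rfl
@[simp] lemma zero_u : (0 : SplitOctonion F).u = 0 := rfl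
@[simp] lemma zero_v : (0 : SplitOctonion F).v = 0 := rfl
@[simp] lemma zero_x2 : (0 : SplitOctonion F).x2 = 0 := rfl
@[simp] lemma add_x1 (x y : SplitOctonion F) : (x + y).x1 = x.x1 + y.x1 := rfl
@[simp] lemma add_u (x y : SplitOctonion F) : (x + y).u = x.u + y.u := rfl
@[simp] lemma add_v (x y : SplitOctonion F) : (x + y).v = x.v + y.v := rfl
@[simp] lemma add_x2 (x y : SplitOctonion F) : (x + y).x2 = x.x2 + y.x2 := rfl
@[simp] lemma neg_x1 (x : SplitOctonion F) : (-x).x1 = -x.x1 := rfl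
@[simp] lemma neg_u (x : SplitOctonion F) : (-x).u = -x.u := rfl
@[simp] lemma neg_v (x : SplitOctonion F) : (-x).v = -x.v := rfl
@[simp] lemma neg_x2 (x : SplitOctonion F) : (-x).x2 = -x.x2 := rfl
@[simp] lemma smul_x1 (c : F) (x : SplitOctonion F) : (c • x).x1 = c * x.x1 := rfl
@[simp] lemma smul_u (c : F) (x : SplitOctonion F) : (c • x).u = c • x.u := rfl
@[simp] lemma smul_v (c : F) (x : SplitOctonion F) : (c • x).v = c • x.v := rfl
@[simp] lemma smul_x2 (c : F) (x : SplitOctonion F) : (c • x).x2 = c * x.x2 := rfl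

instance : AddCommGroup (SplitOctonion F) where
  add_assoc x y z := by ext <;> simp [add_assoc]
  zero_add x := by ext <;> simp
  add_zero x := by ext <;> simp
  add_comm x y := by ext <;> simp [add_comm]
  neg_add_cancel x := by ext <;> simp
  nsmul := nsmulRec
  zsmul := zsmulRec

instance : Module F (SplitOctonion F) where
  one_smul x := by ext <;> simp
  mul_smul c d x := by ext <;> simp [mul_assoc, mul_smul]
  smul_zero c := by ext <;> simp
  smul_add c x y := by ext <;> simp [mul_add, smul_add]
  add_smul c d x := by ext <;> simp [add_mul, add_smul]
  zero_smul x := by ext <;> simp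

/-- Powers of a single octonion (well defined by power-associativity). -/
def npow (x : SplitOctonion F) : ℕ → SplitOctonion F
  | 0 => 1
  | n + 1 => npow x n * x

instance : Pow (SplitOctonion F) ℕ := ⟨npow⟩

/-- Substitution of an octonion into a polynomial over `F`:
`f(x) = αₙ xⁿ + ⋯ + α₁ x + α₀ • 1`. -/
def peval (f : Polynomial F) (x : SplitOctonion F) : SplitOctonion F :=
  f.sum fun i c => c • x ^ i

/-- The octonion `e₁`. -/
def e1 : SplitOctonion F := ⟨1, 0, 0, 0⟩
/-- The octonion `e₂`. -/
def e2 : SplitOctonion F := ⟨0, 0, 0, 1⟩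
/-- The octonion `u₁`. -/
def u1 : SplitOctonion F := ⟨0, ![1, 0, 0], 0, 0⟩

/-- Conjugation on `O`. -/
def conj (x : SplitOctonion F) : SplitOctonion F := ⟨x.x2, -x.u, -x.v, x.x1⟩

/-- The norm of an octonion. -/
def normO (x : SplitOctonion F) : F := x.x1 * x.x2 - dot x.u x.v

/-- The trace of an octonion. -/
def trO (x : SplitOctonion F) : F := x.x1 + x.x2

/-- `g` is an `F`-algebra automorphism of `O`: a linear bijection preserving
multiplication (and the unit). -/
def IsAlgAut (g : SplitOctonion F ≃ₗ[F] SplitOctonion F) : Prop :=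
  g 1 = 1 ∧ ∀ x y, g (x * y) = g x * g y

end SplitOctonion

open Polynomial in
theorem IsAlgClosed.exists_add_eq_mul_eq {F : Type*} [Field F] [IsAlgClosed F] (t n : F) :
    ∃ l m, t = l + m ∧ n = l * m := by
  have h2 : (X ^ 2 - C t * X + C n).natDegree = 2 := by compute_degree!
  obtain ⟨l, hl⟩ := IsAlgClosed.exists_root (X ^ 2 - C t * X + C n)
    (natDegree_pos_iff_degree_pos.mp (by omega)).ne'
  refine ⟨l, t - l, by ring, ?_⟩
  linear_combination (by simpa using hl.eq_zero : l ^ 2 - t * l + n = 0)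

namespace Polynomial

variable {R : Type*} [CommRing R]

/-- The divided difference `(f(l) - f(m)) / (l - m)`, written as a polynomial expression in
`l` and `m` so that it also makes sense (as `f'(l)`) when `l = m`. -/
def divDiff (f : R[X]) (l m : R) : R :=
  f.sum fun k a => a * ∑ i ∈ Finset.range k, l ^ i * m ^ (k - 1 - i)

theorem sub_mul_divDiff (f : R[X]) (l m : R) :
    (l - m) * divDiff f l m = f.eval l - f.eval m := by
  rw [divDiff, eval_eq_sum, eval_eq_sum, sum_def, sum_def, sum_def, Finset.mul_sum,
    ← Finset.sum_sub_distrib]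
  refine Finset.sum_congr rfl fun k _ => ?_
  linear_combination f.coeff k * geom_sum₂_mul l m k

theorem divDiff_self (f : R[X]) (l : R) : divDiff f l l = (derivative f).eval l := by
  rw [divDiff, derivative_eval]
  refine Finset.sum_congr rfl fun k _ => ?_
  dsimp only
  rw [geom_sum₂_self, mul_assoc]

theorem exists_eval_eq_eval_eq_divDiff_eq_zero {F : Type*} [Field F] [IsAlgClosed F]
    {f : F[X]} (hf : 1 < f.natDegree) (γ : F) :
    ∃ l m, f.eval l = γ ∧ f.eval m = γ ∧ divDiff f l m = 0 := by
  set g := f - C γ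
  have hg : g.natDegree = f.natDegree := natDegree_sub_C
  obtain ⟨l, hl⟩ := IsAlgClosed.exists_root g (natDegree_pos_iff_degree_pos.mp (by omega)).ne'
  set q := g /ₘ (X - C l)
  have hgq : (X - C l) * q = g := mul_divByMonic_eq_iff_isRoot.mpr hl
  have hq : q.natDegree = g.natDegree - 1 := by
    rw [natDegree_divByMonic _ (monic_X_sub_C l), natDegree_X_sub_C]
  obtain ⟨m, hm⟩ := IsAlgClosed.exists_root q (natDegree_pos_iff_degree_pos.mp (by omega)).ne'
  have hfl : f.eval l = γ := by simpa [g, sub_eq_zero] using hl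
  have hfm : f.eval m = γ :=
    sub_eq_zero.mp (by simpa [g, hm.eq_zero] using (congrArg (eval m) hgq).symm)
  refine ⟨l, m, hfl, hfm, ?_⟩
  obtain rfl | hlm := eq_or_ne l m
  · -- `l` is a double root of `f - γ`
    have hg' : derivative f = derivative ((X - C l) * q) := by
      rw [hgq, derivative_sub, derivative_C, sub_zero]
    rw [divDiff_self, hg', derivative_mul]
    simpa using hm.eq_zero
  · have h := sub_mul_divDiff f l m
    rw [hfl, hfm, sub_self] at h
    exact (mul_eq_zero.mp h).resolve_left (sub_ne_zero.mpr hlm)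

end Polynomial

namespace SplitOctonion

open Polynomial

variable {F : Type*} [Field F]

@[simp] lemma mul_x1 (x y : SplitOctonion F) : (x * y).x1 = x.x1 * y.x1 + dot x.u y.v := rfl
@[simp] lemma mul_u (x y : SplitOctonion F) :
    (x * y).u = x.x1 • y.u + y.x2 • x.u - cross x.v y.v := rfl
@[simp] lemma mul_v (x y : SplitOctonion F) :
    (x * y).v = y.x1 • x.v + x.x2 • y.v + cross x.u y.u := rfl
@[simp] lemma mul_x2 (x y : SplitOctonion F) : (x * y).x2 = x.x2 * y.x2 + dot x.v y.u := rfl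
@[simp] lemma one_x1 : (1 : SplitOctonion F).x1 = 1 := rfl
@[simp] lemma one_u : (1 : SplitOctonion F).u = 0 := rfl
@[simp] lemma one_v : (1 : SplitOctonion F).v = 0 := rfl
@[simp] lemma one_x2 : (1 : SplitOctonion F).x2 = 1 := rfl

protected lemma pow_zero (x : SplitOctonion F) : x ^ 0 = 1 := rfl
protected lemma pow_succ (x : SplitOctonion F) (k : ℕ) : x ^ (k + 1) = x ^ k * x := rfl

lemma mul_self_eq_trO_smul_sub (x : SplitOctonion F) : x * x = trO x • x - normO x • 1 := by
  ext <;> try (rename_i i; fin_cases i)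
  all_goals (simp [trO, normO, dot, cross, sub_eq_add_neg]; ring)

lemma mul_self_eq_of_trO_eq_of_normO_eq {x : SplitOctonion F} {l m : F}
    (ht : trO x = l + m) (hn : normO x = l * m) : x * x = (l + m) • x - (l * m) • 1 := by
  rw [← ht, ← hn]
  exact mul_self_eq_trO_smul_sub x

lemma smul_add_smul_one_mul (a b : F) (x : SplitOctonion F) :
    (a • x + b • 1) * x = a • (x * x) + b • x := by
  ext <;> try (rename_i i; fin_cases i)
  all_goals (simp [dot, cross, sub_eq_add_neg, Matrix.vecHead, Matrix.vecTail]; ring)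

lemma pow_eq_of_mul_self_eq {x : SplitOctonion F} {l m : F}
    (hx : x * x = (l + m) • x - (l * m) • 1) (k : ℕ) :
    x ^ k = (∑ i ∈ Finset.range k, l ^ i * m ^ (k - 1 - i)) • x
      + (l ^ k - l * ∑ i ∈ Finset.range k, l ^ i * m ^ (k - 1 - i)) • 1 := by
  induction k with
  | zero => rw [SplitOctonion.pow_zero]; simp
  | succ k ih =>
    rw [SplitOctonion.pow_succ, ih, smul_add_smul_one_mul, hx, Nat.add_sub_cancel,
      geom_sum₂_succ_eq]
    module

lemma peval_eq_of_mul_self_eq (f : F[X]) {x : SplitOctonion F} {l m : F}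
    (hx : x * x = (l + m) • x - (l * m) • 1) :
    peval f x = divDiff f l m • x + (f.eval l - l * divDiff f l m) • 1 := by
  simp_rw [peval, pow_eq_of_mul_self_eq hx]
  rw [divDiff, eval_eq_sum, sum_def, sum_def, sum_def, Finset.mul_sum, ← Finset.sum_sub_distrib,
    Finset.sum_smul, Finset.sum_smul, ← Finset.sum_add_distrib]
  refine Finset.sum_congr rfl fun k _ => ?_
  module

lemma trO_smul_add_smul_one (a b : F) (x : SplitOctonion F) :
    trO (a • x + b • 1) = a * trO x + 2 * b := by
  simp [trO]; ring

lemma normO_smul_add_smul_one (a b : F) (x : SplitOctonion F) :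
    normO (a • x + b • 1) = a ^ 2 * normO x + a * b * trO x + b ^ 2 := by
  simp [normO, trO, dot]; ring

def charPoly (x : SplitOctonion F) : F[X] := X ^ 2 - C (trO x) * X + C (normO x)

lemma natDegree_charPoly (x : SplitOctonion F) : (charPoly x).natDegree = 2 := by
  unfold charPoly; compute_degree!

lemma charPoly_smul_add_smul_one (a b : F) {x : SplitOctonion F} {l m : F}
    (ht : trO x = l + m) (hn : normO x = l * m) :
    charPoly (a • x + b • 1) = (X - C (a * l + b)) * (X - C (a * m + b)) := by
  rw [charPoly, trO_smul_add_smul_one, normO_smul_add_smul_one, ht, hn]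
  simp only [map_add, map_mul, map_pow, map_ofNat]
  ring

lemma charPoly_peval (f : F[X]) {x : SplitOctonion F} {l m : F}
    (ht : trO x = l + m) (hn : normO x = l * m) :
    charPoly (peval f x) = (X - C (f.eval l)) * (X - C (f.eval m)) := by
  have hx := mul_self_eq_of_trO_eq_of_normO_eq ht hn
  have hl : divDiff f l m * l + (f.eval l - l * divDiff f l m) = f.eval l := by ring
  have hm : divDiff f l m * m + (f.eval l - l * divDiff f l m) = f.eval m := by
    linear_combination (-1 : F) * sub_mul_divDiff f l m
  rw [peval_eq_of_mul_self_eq f hx, charPoly_smul_add_smul_one _ _ ht hn, hl, hm]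

theorem finite_setOf_peval_eq [IsAlgClosed F] {f : F[X]} (hf : f.natDegree ≠ 0)
    {c : SplitOctonion F} (hc : ∀ γ : F, c ≠ γ • 1) : {x | peval f x = c}.Finite := by
  set S := {l : F | IsRoot ((charPoly c).comp f) l}
  have hS : S.Finite := by
    refine finite_setOfPred_isRoot fun h => hf ?_
    have h2 := congrArg natDegree h
    rw [natDegree_comp, natDegree_charPoly, natDegree_zero] at h2
    omega
  refine ((hS.prod hS).image fun p : F × F =>
    (divDiff f p.1 p.2)⁻¹ • (c - (f.eval p.1 - p.1 * divDiff f p.1 p.2) • 1)).subset ?_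
  intro x hx
  obtain ⟨l, m, ht, hn⟩ := IsAlgClosed.exists_add_eq_mul_eq (trO x) (normO x)
  have hc' : c = divDiff f l m • x + (f.eval l - l * divDiff f l m) • 1 := by
    rw [← hx, peval_eq_of_mul_self_eq f (mul_self_eq_of_trO_eq_of_normO_eq ht hn)]
  have hB : divDiff f l m ≠ 0 := fun h => hc _ (by rw [hc', h, zero_smul, zero_add])
  have hchar : charPoly c = (X - C (f.eval l)) * (X - C (f.eval m)) :=
    hx ▸ charPoly_peval f ht hn
  refine ⟨(l, m), ⟨by simp [S, hchar], by simp [S, hchar]⟩, ?_⟩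
  dsimp only
  rw [hc', add_sub_cancel_right, inv_smul_smul₀ hB]

theorem infinite_setOf_peval_eq_smul_one [IsAlgClosed F] {f : F[X]} (hf : 1 < f.natDegree)
    (γ : F) : {x | peval f x = γ • 1}.Infinite := by
  obtain ⟨l, m, hl, -, hB⟩ := exists_eval_eq_eval_eq_divDiff_eq_zero hf γ
  refine Set.infinite_of_injective_forall_mem
    (f := fun s : F => (⟨l, ![s, 0, 0], 0, m⟩ : SplitOctonion F))
    (fun s t h => by simpa using congrArg (fun x => x.u 0) h) fun s => ?_
  have hx := mul_self_eq_of_trO_eq_of_normO_eq (x := ⟨l, ![s, 0, 0], 0, m⟩) rfl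
    (by simp [normO, dot])
  show peval f _ = γ • 1
  rw [peval_eq_of_mul_self_eq f hx, hB, hl]
  simp

end SplitOctonion

open SplitOctonion Polynomial in
theorem infinite_solutions_iff_general {F : Type*} [Field F] [IsAlgClosed F]
    (f : Polynomial F) (hdeg : 1 < f.natDegree)
    (c : SplitOctonion F) :
    {x : SplitOctonion F | peval f x = c}.Infinite ↔
      ∃ γ : F, c = γ • (1 : SplitOctonion F) := by
  constructor
  · intro h
    by_contra! hc
    exact h (finite_setOf_peval_eq (by omega) hc)
  · rintro ⟨γ, rfl⟩
    exact infinite_setOf_peval_eq_smul_one hdeg γ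

open SplitOctonion Polynomial in
/-- the solution set of `f(x) = c` is infinite iff `c` is scalar. -/
theorem infinite_solutions_iff {F : Type*} [Field F] [IsAlgClosed F]
    (f : Polynomial F) (hf : f ≠ 0) (hdeg : 1 < f.natDegree) (hf0 : f.coeff 0 = 0)
    (c : SplitOctonion F) :
    {x : SplitOctonion F | peval f x = c}.Infinite ↔
      ∃ γ : F, c = γ • (1 : SplitOctonion F) :=
  infinite_solutions_iff_general f hdeg c
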